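/- Multiclass robustness certificate: let W ∈ ℝ^{p×K} with columns W₁,…,W_K, c_W = max_{i≠j}‖W_i − W_j‖₂, and suppose the feature stability bound ‖φ_D(x) − φ_D(x+v)‖₂ ≤ ν/√(1−η_s) holds for all ‖v‖₂ ≤ ν. If the multiclass margin ρ_x = W_yᵀφ_D(x) − max_{j≠y} W_jᵀφ_D(x) satisfies ρ_x > c_W·ν/√(1−η_s), then argmax_j W_jᵀφ_D(x+v) = y for all ‖v‖₂ ≤ ν. -/

import Mathlib

open scoped BigOperators
open Finset

noncomputable def l2 {n : ℕ} (x : Fin n → ℝ) : ℝ := Real.sqrt (∑ i, (x i) ^ 2)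

noncomputable def l1 {n : ℕ} (x : Fin n → ℝ) : ℝ := ∑ i, |x i|

noncomputable def inp {n : ℕ} (x y : Fin n → ℝ) : ℝ := ∑ i, x i * y i

/-- The Lasso objective `z ↦ (1/2)‖x − Dz‖₂² + λ‖z‖₁`. -/
noncomputable def lassoObj {d p : ℕ} (D : Matrix (Fin d) (Fin p) ℝ) (lam : ℝ)
    (x : Fin d → ℝ) (z : Fin p → ℝ) : ℝ :=
  (1 / 2) * (l2 (x - D.mulVec z)) ^ 2 + lam * l1 z

/-! For each `j ≠ y`, the pairwise margin `⟨W_y − W_j, φ(·)⟩` moves between `x` and `x + v` by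
at most `‖W_y − W_j‖₂ · ‖φ(x) − φ(x + v)‖₂ ≤ c_W ν / √(1 − η)` (Cauchy–Schwarz and feature
stability), which is smaller than the margin `ρ` at `x`. -/

section InnerProduct

variable {n : ℕ}

lemma l2_nonneg (a : Fin n → ℝ) : 0 ≤ l2 a := Real.sqrt_nonneg _

lemma inp_le_l2_mul_l2 (a b : Fin n → ℝ) : inp a b ≤ l2 a * l2 b :=
  Real.sum_mul_le_sqrt_mul_sqrt _ _ _

lemma inp_sub_left (a b u : Fin n → ℝ) : inp (a - b) u = inp a u - inp b u := by
  simp only [inp, Pi.sub_apply, sub_mul, Finset.sum_sub_distrib]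

lemma inp_sub_right (a u w : Fin n → ℝ) : inp a (u - w) = inp a u - inp a w := by
  simp only [inp, Pi.sub_apply, mul_sub, Finset.sum_sub_distrib]

lemma inp_sub_le_of_l2_le {a u w : Fin n → ℝ} {c r : ℝ} (ha : l2 a ≤ c) (huw : l2 (u - w) ≤ r) :
    inp a u - inp a w ≤ c * r := by
  rw [← inp_sub_right]
  calc inp a (u - w) ≤ l2 a * l2 (u - w) := inp_le_l2_mul_l2 a (u - w)
    _ ≤ c * r := mul_le_mul ha huw (l2_nonneg _) ((l2_nonneg a).trans ha)

end InnerProduct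

theorem stmt13_general {d p K : ℕ} (φ : (Fin d → ℝ) → Fin p → ℝ)
    (η ν cW ρ : ℝ)
    (W : Fin K → Fin p → ℝ)
    (hcW : ∀ i j, i ≠ j → l2 (W i - W j) ≤ cW)
    (x : Fin d → ℝ) (y : Fin K)
    (hstab : ∀ v : Fin d → ℝ, l2 v ≤ ν →
      l2 (φ x - φ (x + v)) ≤ ν / Real.sqrt (1 - η))
    (hρ : ∀ j, j ≠ y → ρ ≤ inp (W y) (φ x) - inp (W j) (φ x))
    (hmargin : cW * ν / Real.sqrt (1 - η) < ρ) :
    ∀ v : Fin d → ℝ, l2 v ≤ ν →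
      ∀ j, j ≠ y → inp (W j) (φ (x + v)) < inp (W y) (φ (x + v)) := by
  intro v hv j hj
  have hshift := inp_sub_le_of_l2_le (hcW y j (Ne.symm hj)) (hstab v hv)
  rw [inp_sub_left, inp_sub_left, ← mul_div_assoc] at hshift
  linarith [hρ j hj]

/-- multiclass robustness certificate. -/
theorem stmt13 {d p K : ℕ} (φ : (Fin d → ℝ) → Fin p → ℝ)
    (η ν cW ρ : ℝ) (hη0 : 0 ≤ η) (hη : η < 1) (hν : 0 ≤ ν)
    (W : Fin K → Fin p → ℝ)
    (hcW : ∀ i j, i ≠ j → l2 (W i - W j) ≤ cW)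
    (x : Fin d → ℝ) (y : Fin K)
    (hstab : ∀ v : Fin d → ℝ, l2 v ≤ ν →
      l2 (φ x - φ (x + v)) ≤ ν / Real.sqrt (1 - η))
    (hρ : ∀ j, j ≠ y → ρ ≤ inp (W y) (φ x) - inp (W j) (φ x))
    (hmargin : cW * ν / Real.sqrt (1 - η) < ρ) :
    ∀ v : Fin d → ℝ, l2 v ≤ ν →
      ∀ j, j ≠ y → inp (W j) (φ (x + v)) < inp (W y) (φ (x + v)) :=
  stmt13_general φ η ν cW ρ W hcW x y hstab hρ hmargin
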